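/- Let p be a prime with p ≡ -1 (mod 12) and let E₁, E₂, D₁, D₂ be the quadratic residue codes of length p over R = ℤ₉[u]/(u²-u). Then E₁ and E₂ are Euclidean self-orthogonal and Eᵢ^⊥ = Dᵢ for i = 1, 2. -/

import Mathlib

/-!
Since `u` is idempotent, `R = ℤ₉[u]/(u² - u)` splits as `u R ⊕ (1 - u) R` with both summands
copies of `ℤ₉`, and each generator is `u · e(Q, N) + (1 - u) · e(N, Q)` for a `ℤ₉`-combination
`e` of `1`, `Q`, `N`. The Jacobi sum of the quadratic character gives `(Q - N)² = (Q + N) - (p - 1)`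
when `-1` is a non-residue, and together with `(1 + Q + N)² = p (1 + Q + N)` this determines the
products `Q²`, `N²`, `QN`. Reducing that table mod 9 shows that `Eᵢ` is idempotent, `Dᵢ Eᵢ = Eᵢ`,
and `1 - Eᵢ(X⁻¹) = Dᵢ`, since `X ↦ X⁻¹` swaps `Q` and `N`. Finally, the Euclidean dual of the
cyclic code generated by an idempotent `e` is generated by `1 - e(X⁻¹)`, because the coefficients
of `x(X) c(X⁻¹)` are the inner products of `x` with the cyclic shifts of `c`.
-/

open Polynomial

noncomputable section

/-- The ring `R = ℤ₉[u]/(u² - u)`. -/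
abbrev R9 : Type := Polynomial (ZMod 9) ⧸ Ideal.span {(X : Polynomial (ZMod 9)) ^ 2 - X}

instance : CommRing R9 := Ideal.Quotient.commRing _

/-- The element `u` of `R`, the image of `X`. -/
def uu : R9 := Ideal.Quotient.mk _ (X : Polynomial (ZMod 9))

/-- The canonical embedding `ℤ₉ → R`. -/
def ι : ZMod 9 →+* R9 :=
  (Ideal.Quotient.mk _).comp (Polynomial.C : ZMod 9 →+* Polynomial (ZMod 9))
/-- The quotient ring `R[X]/(Xⁿ - 1)`. -/
abbrev Rn (n : ℕ) : Type := Polynomial R9 ⧸ Ideal.span {(X : Polynomial R9) ^ n - 1}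

instance (n : ℕ) : CommRing (Rn n) := Ideal.Quotient.commRing _

/-- The constants embedding `R → R[X]/(Xⁿ-1)`. -/
def ofR (n : ℕ) : R9 →+* Rn n :=
  (Ideal.Quotient.mk _).comp (Polynomial.C : R9 →+* Polynomial R9)

/-- The image of `X` in `R[X]/(Xⁿ-1)`. -/
def xbar (n : ℕ) : Rn n := Ideal.Quotient.mk _ (X : Polynomial R9)

/-- A word `c ∈ Rⁿ` viewed as the element `Σ cᵢ Xⁱ` of `R[X]/(Xⁿ-1)`. -/
def toPoly (n : ℕ) (c : Fin n → R9) : Rn n :=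
  ∑ i, ofR n (c i) * xbar n ^ (i : ℕ)

/-- The ring endomorphism of `R[X]/(Xⁿ-1)` induced by `X ↦ X^{n-1} = X⁻¹`. -/
def invX (n : ℕ) : Rn n →+* Rn n :=
  Ideal.Quotient.lift _ (Polynomial.eval₂RingHom (ofR n) (xbar n ^ (n - 1)))
    (by
      intro a ha
      have hx : xbar n ^ n = 1 := by
        rw [xbar, ← map_pow, ← map_one (Ideal.Quotient.mk _),
          Ideal.Quotient.mk_eq_mk_iff_sub_mem]
        exact Ideal.subset_span rfl
      have h : Ideal.span {(X : Polynomial R9) ^ n - 1} ≤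
          RingHom.ker (Polynomial.eval₂RingHom (ofR n) (xbar n ^ (n - 1))) := by
        rw [Ideal.span_le, Set.singleton_subset_iff]
        simp only [SetLike.mem_coe, RingHom.mem_ker, map_sub, map_pow, map_one,
          Polynomial.coe_eval₂RingHom, Polynomial.eval₂_X]
        rw [← pow_mul, Nat.mul_comm, pow_mul, hx, one_pow, sub_self]
      exact h ha)

/-- The Euclidean dual of the cyclic code given by an ideal of `R[X]/(Xⁿ-1)`. -/
def dualCode (n : ℕ) (J : Ideal (Rn n)) : Set (Fin n → R9) :=
  {x | ∀ c : Fin n → R9, toPoly n c ∈ J → ∑ i, x i * c i = 0}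

/-- The cyclic shift. -/
def shift {α : Type*} {n : ℕ} [NeZero n] (c : Fin n → α) : Fin n → α :=
  fun i => c (i - 1)

open scoped Classical

/-- `Q(X) = Σ_{i ∈ Q_p} Xⁱ`, the sum over nonzero quadratic residues mod `p`,
as an element of `R[X]/(X^p - 1)`. -/
def Qpoly (p : ℕ) [Fact p.Prime] : Rn p :=
  ∑ i : ZMod p, if i ≠ 0 ∧ IsSquare i then xbar p ^ i.val else 0

/-- `N(X) = Σ_{i ∈ N_p} Xⁱ`, the sum over quadratic non-residues mod `p`. -/
def Npoly (p : ℕ) [Fact p.Prime] : Rn p :=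
  ∑ i : ZMod p, if i ≠ 0 ∧ ¬ IsSquare i then xbar p ^ i.val else 0

/-- The image of `u` as a constant in `R[X]/(X^p-1)`. -/
def uP (p : ℕ) : Rn p := ofR p uu

/-- Generating idempotent of the quadratic residue code `D₁` (case split on `r mod 3`,
where `p = 12r - 1`). -/
def D1gen (p : ℕ) [Fact p.Prime] : Rn p :=
  let r := (p + 1) / 12
  if r % 3 = 0 then uP p * (8 * Qpoly p) + (1 - uP p) * (8 * Npoly p)
  else if r % 3 = 1 then
    uP p * (3 + 6 * Qpoly p + 8 * Npoly p) + (1 - uP p) * (3 + 6 * Npoly p + 8 * Qpoly p)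
  else uP p * (6 + 3 * Qpoly p + 8 * Npoly p) + (1 - uP p) * (6 + 3 * Npoly p + 8 * Qpoly p)

/-- Generating idempotent of the quadratic residue code `D₂`. -/
def D2gen (p : ℕ) [Fact p.Prime] : Rn p :=
  let r := (p + 1) / 12
  if r % 3 = 0 then uP p * (8 * Npoly p) + (1 - uP p) * (8 * Qpoly p)
  else if r % 3 = 1 then
    uP p * (3 + 6 * Npoly p + 8 * Qpoly p) + (1 - uP p) * (3 + 6 * Qpoly p + 8 * Npoly p)
  else uP p * (6 + 3 * Npoly p + 8 * Qpoly p) + (1 - uP p) * (6 + 3 * Qpoly p + 8 * Npoly p)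

/-- Generating idempotent of the quadratic residue code `E₁`. -/
def E1gen (p : ℕ) [Fact p.Prime] : Rn p :=
  let r := (p + 1) / 12
  if r % 3 = 0 then uP p * (1 + Npoly p) + (1 - uP p) * (1 + Qpoly p)
  else if r % 3 = 1 then
    uP p * (7 + Qpoly p + 3 * Npoly p) + (1 - uP p) * (7 + Npoly p + 3 * Qpoly p)
  else uP p * (4 + Qpoly p + 6 * Npoly p) + (1 - uP p) * (4 + Npoly p + 6 * Qpoly p)

/-- Generating idempotent of the quadratic residue code `E₂`. -/
def E2gen (p : ℕ) [Fact p.Prime] : Rn p :=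
  let r := (p + 1) / 12
  if r % 3 = 0 then uP p * (1 + Qpoly p) + (1 - uP p) * (1 + Npoly p)
  else if r % 3 = 1 then
    uP p * (7 + Npoly p + 3 * Qpoly p) + (1 - uP p) * (7 + Qpoly p + 3 * Npoly p)
  else uP p * (4 + Npoly p + 6 * Qpoly p) + (1 - uP p) * (4 + Qpoly p + 6 * Npoly p)


instance : Nontrivial R9 := by
  have : Fact (1 < 9) := ⟨by norm_num⟩
  exact (Ideal.Quotient.lift _ (Polynomial.evalRingHom (0 : ZMod 9)) fun q hq => by
    obtain ⟨c, rfl⟩ := Ideal.mem_span_singleton'.mp hq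
    simp).domain_nontrivial

lemma nine_eq_zero {n : ℕ} : (9 : Rn n) = 0 := by
  have h := map_natCast ((ofR n).comp ι) 9
  rwa [ZMod.natCast_self, map_zero, eq_comm, Nat.cast_ofNat] at h

lemma isIdempotentElem_uP {n : ℕ} : IsIdempotentElem (uP n) := by
  have h : uu * uu = uu := by
    rw [uu, ← map_mul, Ideal.Quotient.mk_eq_mk_iff_sub_mem]
    exact Ideal.mem_span_singleton.mpr ⟨1, by ring⟩
  rw [IsIdempotentElem, uP, ← map_mul, h]

section CyclicCode

variable {n : ℕ}

lemma xbar_pow_self : xbar n ^ n = 1 := by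
  rw [xbar, ← map_pow, ← map_one (Ideal.Quotient.mk _), Ideal.Quotient.mk_eq_mk_iff_sub_mem]
  exact Ideal.subset_span rfl

lemma xbar_pow_mod (k : ℕ) : xbar n ^ k = xbar n ^ (k % n) := by
  conv_lhs => rw [← Nat.div_add_mod k n, pow_add, pow_mul, xbar_pow_self, one_pow, one_mul]

lemma xbar_pow_pred_mul_xbar [NeZero n] : xbar n ^ (n - 1) * xbar n = 1 := by
  rw [← pow_succ, Nat.sub_add_cancel (NeZero.one_le (n := n)), xbar_pow_self]

lemma xbar_pow_fin_add [NeZero n] (i j : Fin n) :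
    xbar n ^ ((i + j : Fin n) : ℕ) = xbar n ^ (i : ℕ) * xbar n ^ (j : ℕ) := by
  rw [Fin.val_add, ← xbar_pow_mod, pow_add]

lemma invX_xbar : invX n (xbar n) = xbar n ^ (n - 1) :=
  Polynomial.eval₂_X _ _

lemma invX_ofR (a : R9) : invX n (ofR n a) = ofR n a :=
  Polynomial.eval₂_C _ _

lemma monic_X_pow_sub_one [NeZero n] : ((X : Polynomial R9) ^ n - 1).Monic :=
  Polynomial.monic_X_pow_sub (Polynomial.degree_one_le.trans_lt (by exact_mod_cast NeZero.pos n))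

lemma natDegree_X_pow_sub_one : ((X : Polynomial R9) ^ n - 1).natDegree = n := by
  simpa using Polynomial.natDegree_X_pow_sub_C (n := n) (r := (1 : R9))

lemma toPoly_bijective [NeZero n] : Function.Bijective (toPoly n) := by
  let b := (AdjoinRoot.powerBasis' (monic_X_pow_sub_one (n := n))).basis.reindex
    (finCongr (natDegree_X_pow_sub_one (n := n)))
  have h : toPoly n = b.equivFun.symm := by
    funext c
    simp only [toPoly, b, Module.Basis.equivFun_symm_apply, Module.Basis.coe_reindex,
      PowerBasis.coe_basis, AdjoinRoot.powerBasis'_gen, Function.comp_apply, Algebra.smul_def,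
      AdjoinRoot.algebraMap_eq]
    rfl
  exact h ▸ b.equivFun.symm.bijective

lemma xbar_pow_mul_inv_pow [NeZero n] (i j : Fin n) :
    xbar n ^ (i : ℕ) * (xbar n ^ (n - 1)) ^ (j : ℕ) = xbar n ^ ((i - j : Fin n) : ℕ) := by
  have h := xbar_pow_fin_add (i - j) j
  rw [sub_add_cancel] at h
  rw [h, mul_assoc, ← mul_pow, mul_comm (xbar n), xbar_pow_pred_mul_xbar, one_pow, mul_one]

lemma toPoly_shift [NeZero n] (c : Fin n → R9) (k : Fin n) :
    toPoly n (fun i => c (i - k)) = xbar n ^ (k : ℕ) * toPoly n c := by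
  rw [toPoly, toPoly, Finset.mul_sum]
  refine Fintype.sum_equiv (Equiv.subRight k) _ _ fun i => ?_
  have h := xbar_pow_fin_add (i - k) k
  rw [sub_add_cancel] at h
  rw [Equiv.subRight_apply, h]
  ring

lemma toPoly_mul_invX_toPoly [NeZero n] (x c : Fin n → R9) :
    toPoly n x * invX n (toPoly n c) = toPoly n (fun k => ∑ i, x i * c (i - k)) := by
  rw [toPoly, toPoly, map_sum, Finset.sum_mul_sum, toPoly]
  simp only [map_mul, map_pow, invX_ofR, invX_xbar, map_sum, Finset.sum_mul]
  conv_rhs => rw [Finset.sum_comm]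
  refine Finset.sum_congr rfl fun i _ => ?_
  refine Fintype.sum_equiv (Equiv.subLeft i) _ _ fun j => ?_
  rw [Equiv.subLeft_apply, sub_sub_cancel, ← xbar_pow_mul_inv_pow]
  ring

lemma mem_dualCode_span_singleton_iff [NeZero n] (e : Rn n) (x : Fin n → R9) :
    x ∈ dualCode n (Ideal.span {e}) ↔ toPoly n x * invX n e = 0 := by
  constructor
  · intro hx
    obtain ⟨c, rfl⟩ := toPoly_bijective.2 e
    have hzero : ∀ k : Fin n, ∑ i, x i * c (i - k) = 0 := fun k =>
      hx _ (by rw [toPoly_shift]; exact Ideal.mul_mem_left _ _ (Ideal.mem_span_singleton_self _))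
    rw [toPoly_mul_invX_toPoly]
    simp [toPoly, hzero]
  · intro hxe c hc
    obtain ⟨g, hg⟩ := Ideal.mem_span_singleton'.mp hc
    have h : toPoly n x * invX n (toPoly n c) = 0 := by
      rw [← hg, map_mul, mul_left_comm, hxe, mul_zero]
    have h0 : toPoly n 0 = 0 := by simp [toPoly]
    rw [toPoly_mul_invX_toPoly, ← h0] at h
    simpa using congrFun (toPoly_bijective.1 h) 0

lemma dualCode_span_idempotent [NeZero n] {e : Rn n} (he : IsIdempotentElem e) :
    dualCode n (Ideal.span {e}) = {x | toPoly n x ∈ Ideal.span {1 - invX n e}} := by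
  ext x
  have hσe : IsIdempotentElem (invX n e) := he.map (invX n)
  rw [Set.mem_ofPred_eq, mem_dualCode_span_singleton_iff, Ideal.mem_span_singleton']
  constructor
  · intro h
    exact ⟨toPoly n x, by rw [mul_sub, mul_one, h, sub_zero]⟩
  · rintro ⟨g, hg⟩
    rw [← hg, mul_assoc, sub_mul, one_mul, hσe.eq, sub_self, mul_zero]

lemma selfOrthogonal_and_dualCode_eq_of_isIdempotentElem [NeZero n] {e d : Rn n}
    (he : IsIdempotentElem e) (hde : d * e = e) (hd : 1 - invX n e = d) :
    (∀ x : Fin n → R9, toPoly n x ∈ Ideal.span {e} → x ∈ dualCode n (Ideal.span {e})) ∧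
      dualCode n (Ideal.span {e}) = {x | toPoly n x ∈ Ideal.span {d}} := by
  rw [dualCode_span_idempotent he, hd]
  refine ⟨fun x hx => ?_, rfl⟩
  obtain ⟨g, hg⟩ := Ideal.mem_span_singleton'.mp hx
  exact Ideal.mem_span_singleton'.mpr ⟨g * e, by rw [mul_assoc, mul_comm e, hde, hg]⟩

end CyclicCode

section QuadraticCharacter

variable {F : Type*} [Field F] [Fintype F] [DecidableEq F]

lemma sum_quadraticChar_mul_quadraticChar_sub (hF : ringChar F ≠ 2) {c : F} (hc : c ≠ 0) :
    ∑ a : F, quadraticChar F a * quadraticChar F (c - a) = -quadraticChar F (-1) := by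
  have hJ := jacobiSum_nontrivial_inv (quadraticChar_ne_one hF)
  rw [(quadraticChar_isQuadratic F).inv, jacobiSum] at hJ
  rw [← hJ]
  refine Fintype.sum_equiv (Equiv.mulLeft₀ c hc).symm _ _ fun a => ?_
  have ha : a = c * (c⁻¹ * a) := by field_simp
  have hca : c - a = c * (1 - c⁻¹ * a) := by field_simp
  rw [Equiv.mulLeft₀_symm_apply, hca]
  nth_rewrite 1 [ha]
  rw [map_mul (quadraticChar F) c, map_mul (quadraticChar F) c]
  linear_combination (quadraticChar F (c⁻¹ * a) * quadraticChar F (1 - c⁻¹ * a)) *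
    quadraticChar_sq_one hc

lemma sum_quadraticChar_mul_quadraticChar_neg :
    ∑ a : F, quadraticChar F a * quadraticChar F (-a)
      = quadraticChar F (-1) * (Fintype.card F - 1) := by
  have h : ∀ a : F, quadraticChar F a * quadraticChar F (-a)
      = quadraticChar F (-1) * (1 - if a = 0 then 1 else 0) := by
    intro a
    by_cases ha : a = 0
    · simp [ha]
    · rw [neg_eq_neg_one_mul, map_mul, if_neg ha, sub_zero, mul_one, mul_left_comm,
        ← sq, quadraticChar_sq_one ha, mul_one]
  rw [Finset.sum_congr rfl fun a _ => h a, ← Finset.mul_sum, Finset.sum_sub_distrib]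
  simp

end QuadraticCharacter

section QRTable

variable {A : Type*} [CommRing A]

/-- For `p ≡ 3 (mod 4)` the quadratic residue sums satisfy `Q² = ((p-3)/4) Q + ((p+1)/4) N`,
`N² = ((p+1)/4) Q + ((p-3)/4) N` and `QN = (p-1)/2 + ((p-3)/4)(Q + N)`; here the denominators
are cleared. -/
structure IsQRTable (p Q N : A) : Prop where
  mul_self_left : 4 * (Q * Q) = (p - 3) * Q + (p + 1) * N
  mul_self_right : 4 * (N * N) = (p + 1) * Q + (p - 3) * N
  mul : 4 * (Q * N) = 2 * (p - 1) + (p - 3) * (Q + N)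

theorem IsQRTable.swap {p Q N : A} (T : IsQRTable p Q N) : IsQRTable p N Q :=
  ⟨by linear_combination T.mul_self_right, by linear_combination T.mul_self_left,
    by linear_combination T.mul⟩

def peirceMk (u a b : A) : A := u * a + (1 - u) * b

lemma peirceMk_mul_peirceMk {u : A} (hu : IsIdempotentElem u) (a b c d : A) :
    peirceMk u a b * peirceMk u c d = peirceMk u (a * c) (b * d) := by
  unfold peirceMk
  linear_combination (a * c + b * d - a * d - b * c) * hu.eq

lemma one_sub_peirceMk (u a b : A) : 1 - peirceMk u a b = peirceMk u (1 - a) (1 - b) := by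
  unfold peirceMk
  ring

lemma map_peirceMk (σ : A →+* A) (u a b : A) :
    σ (peirceMk u a b) = peirceMk (σ u) (σ a) (σ b) := by
  simp only [peirceMk, map_add, map_mul, map_sub, map_one]

/-- The generators of the paper are `u · e(Q, N) + (1 - u) · e(N, Q)` with `e` an idempotent of
`ℤ₉[X]/(X^p - 1)` depending on `k = r mod 3`, where `p = 12r - 1` (see `qrGenerators_eq`). -/
def qrComponentE (k : ℕ) (Q N : A) : A :=
  if k = 0 then 1 + N else if k = 1 then 7 + Q + 3 * N else 4 + Q + 6 * N

def qrComponentD (k : ℕ) (Q N : A) : A :=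
  if k = 0 then 8 * Q else if k = 1 then 3 + 6 * Q + 8 * N else 6 + 3 * Q + 8 * N

lemma map_qrComponentE (σ : A →+* A) (k : ℕ) (Q N : A) :
    σ (qrComponentE k Q N) = qrComponentE k (σ Q) (σ N) := by
  unfold qrComponentE
  split_ifs <;> simp only [map_add, map_mul, map_one, map_ofNat]

lemma qrComponentE_spec (h9 : (9 : A) = 0) {k : ℕ} (hk : k < 3) {p Q N : A}
    (hp : p = 3 * k - 1) (T : IsQRTable p Q N) :
    IsIdempotentElem (qrComponentE k Q N) ∧
      qrComponentD k Q N * qrComponentE k Q N = qrComponentE k Q N ∧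
      1 - qrComponentE k N Q = qrComponentD k Q N := by
  unfold IsIdempotentElem qrComponentE qrComponentD
  -- each identity is the table with `p` substituted, multiplied by `4⁻¹ = 7` and reduced mod 9
  interval_cases k <;> norm_num at hp ⊢ <;> subst hp
  · refine ⟨?_, ?_, ?_⟩
    · linear_combination -2 * T.mul_self_right + (N + N ^ 2) * h9
    · linear_combination 2 * T.mul - (1 + N) * h9
    · linear_combination -Q * h9
  · refine ⟨?_, ?_, ?_⟩
    · linear_combination -2 * T.mul_self_left - 3 * T.mul +
        (4 + 4 * N + N ^ 2 + 2 * Q + 2 * Q * N + Q ^ 2) * h9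
    · linear_combination -3 * T.mul_self_left - 3 * T.mul_self_right + 2 * T.mul +
        (2 + 6 * N + 4 * N ^ 2 + 4 * Q + 2 * Q * N + 2 * Q ^ 2) * h9
    · linear_combination -(1 + N + Q) * h9
  · refine ⟨?_, ?_, ?_⟩
    · linear_combination -2 * T.mul_self_left + 3 * T.mul +
        (4 + 4 * N + 4 * N ^ 2 + Q + Q ^ 2) * h9
    · linear_combination 3 * T.mul_self_left + 3 * T.mul_self_right + 2 * T.mul +
        (4 + 10 * N + 4 * N ^ 2 + 5 * Q + 2 * Q * N - Q ^ 2) * h9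
    · linear_combination -(1 + N + Q) * h9

def qrE (k : ℕ) (u Q N : A) : A := peirceMk u (qrComponentE k Q N) (qrComponentE k N Q)

def qrD (k : ℕ) (u Q N : A) : A := peirceMk u (qrComponentD k Q N) (qrComponentD k N Q)

theorem qrE_spec (σ : A →+* A) (h9 : (9 : A) = 0) {k : ℕ} (hk : k < 3) {p u Q N : A}
    (hp : p = 3 * k - 1) (T : IsQRTable p Q N) (hu : IsIdempotentElem u) (hσu : σ u = u)
    (hσQ : σ Q = N) (hσN : σ N = Q) :
    IsIdempotentElem (qrE k u Q N) ∧ qrD k u Q N * qrE k u Q N = qrE k u Q N ∧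
      1 - σ (qrE k u Q N) = qrD k u Q N := by
  obtain ⟨he, hde, hd⟩ := qrComponentE_spec h9 hk hp T
  obtain ⟨he', hde', hd'⟩ := qrComponentE_spec h9 hk hp T.swap
  refine ⟨?_, ?_, ?_⟩
  · rw [IsIdempotentElem, qrE, peirceMk_mul_peirceMk hu, he.eq, he'.eq]
  · rw [qrD, qrE, peirceMk_mul_peirceMk hu, hde, hde']
  · rw [qrE, map_peirceMk, hσu, map_qrComponentE, map_qrComponentE, hσQ, hσN, one_sub_peirceMk,
      hd, hd', qrD]

lemma natCast_eq_of_mod_twelve (h9 : (9 : A) = 0) {p : ℕ} (hp : p % 12 = 11) :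
    (p : A) = 3 * ((p + 1) / 12 % 3 : ℕ) - 1 := by
  have h : p + 1 = 3 * ((p + 1) / 12 % 3) + 9 * (4 * ((p + 1) / 12 / 3) + (p + 1) / 12 % 3) := by
    omega
  have hA := congrArg (Nat.cast : ℕ → A) h
  push_cast at hA
  linear_combination hA + (4 * (((p + 1) / 12 / 3 : ℕ) : A) + ((p + 1) / 12 % 3 : ℕ)) * h9

end QRTable

section QuadraticResidueSums

variable {p : ℕ} [Fact p.Prime]

lemma xbar_pow_val_add (a b : ZMod p) :
    xbar p ^ (a + b).val = xbar p ^ a.val * xbar p ^ b.val := by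
  rw [ZMod.val_add, ← xbar_pow_mod, pow_add]

lemma invX_xbar_pow_val (a : ZMod p) : invX p (xbar p ^ a.val) = xbar p ^ (-a).val := by
  refine left_inv_eq_right_inv (a := xbar p ^ a.val) ?_ ?_
  · rw [map_pow, invX_xbar, ← mul_pow, xbar_pow_pred_mul_xbar, one_pow]
  · rw [← xbar_pow_val_add, add_neg_cancel, ZMod.val_zero, pow_zero]

lemma invX_sum_ite (P : ZMod p → Prop) [DecidablePred P] :
    invX p (∑ a : ZMod p, if P a then xbar p ^ a.val else 0)
      = ∑ a : ZMod p, if P (-a) then xbar p ^ a.val else 0 := by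
  rw [map_sum]
  refine Fintype.sum_equiv (Equiv.neg (ZMod p)) _ _ fun a => ?_
  rw [apply_ite (invX p), invX_xbar_pow_val, map_zero, Equiv.neg_apply, neg_neg]

lemma isSquare_neg_iff (hp : p % 4 = 3) {a : ZMod p} (ha : a ≠ 0) :
    IsSquare (-a) ↔ ¬ IsSquare a := by
  have hχ : quadraticChar (ZMod p) (-1) = -1 := by
    rw [quadraticChar_neg_one_iff_not_isSquare, FiniteField.isSquare_neg_one_iff, ZMod.card]
    omega
  rw [← quadraticChar_one_iff_isSquare (neg_ne_zero.mpr ha),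
    ← quadraticChar_neg_one_iff_not_isSquare, neg_eq_neg_one_mul, map_mul, hχ]
  constructor <;> intro h <;> linarith

lemma invX_Qpoly (hp : p % 4 = 3) : invX p (Qpoly p) = Npoly p := by
  rw [Qpoly, invX_sum_ite, Npoly]
  refine Finset.sum_congr rfl fun a _ => ?_
  by_cases ha : a = 0
  · simp [ha]
  · simp [ha, isSquare_neg_iff hp ha]

lemma invX_Npoly (hp : p % 4 = 3) : invX p (Npoly p) = Qpoly p := by
  rw [Npoly, invX_sum_ite, Qpoly]
  refine Finset.sum_congr rfl fun a _ => ?_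
  by_cases ha : a = 0
  · simp [ha]
  · simp [ha, isSquare_neg_iff hp ha]

lemma Qpoly_add_Npoly :
    Qpoly p + Npoly p = ∑ a : ZMod p, if a ≠ 0 then xbar p ^ a.val else 0 := by
  rw [Qpoly, Npoly, ← Finset.sum_add_distrib]
  refine Finset.sum_congr rfl fun a _ => ?_
  by_cases ha : a = 0 <;> by_cases hs : IsSquare a <;> simp [ha, hs]

lemma sum_xbar_pow_val : ∑ a : ZMod p, xbar p ^ a.val = 1 + (Qpoly p + Npoly p) := by
  rw [Qpoly_add_Npoly, Fintype.sum_eq_add_sum_compl 0 (fun a : ZMod p => xbar p ^ a.val),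
    ZMod.val_zero, pow_zero, Finset.sum_ite, Finset.sum_const_zero, add_zero]
  congr 2
  ext a
  simp

lemma Qpoly_sub_Npoly :
    Qpoly p - Npoly p = ∑ a : ZMod p, (quadraticChar (ZMod p) a : Rn p) * xbar p ^ a.val := by
  rw [Qpoly, Npoly, ← Finset.sum_sub_distrib]
  refine Finset.sum_congr rfl fun a _ => ?_
  by_cases ha : a = 0
  · simp [ha]
  by_cases hs : IsSquare a
  · simp [ha, hs, (quadraticChar_one_iff_isSquare ha).mpr hs]
  · simp [ha, hs, quadraticChar_neg_one_iff_not_isSquare.mpr hs]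

lemma sum_xbar_pow_val_mul_sum (f g : ZMod p → Rn p) :
    (∑ a, f a * xbar p ^ a.val) * (∑ b, g b * xbar p ^ b.val)
      = ∑ c, (∑ a, f a * g (c - a)) * xbar p ^ c.val := by
  rw [Finset.sum_mul_sum]
  simp only [Finset.sum_mul]
  conv_rhs => rw [Finset.sum_comm]
  refine Finset.sum_congr rfl fun a _ => ?_
  refine Fintype.sum_equiv (Equiv.addLeft a) _ _ fun b => ?_
  rw [Equiv.coe_addLeft, add_sub_cancel_left, xbar_pow_val_add]
  ring

lemma xbar_pow_val_mul_sum_xbar_pow_val (b : ZMod p) :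
    xbar p ^ b.val * ∑ a : ZMod p, xbar p ^ a.val = ∑ a : ZMod p, xbar p ^ a.val := by
  rw [Finset.mul_sum]
  exact Fintype.sum_equiv (Equiv.addLeft b) _ _ fun a => (xbar_pow_val_add b a).symm

lemma one_add_Qpoly_add_Npoly_mul_self :
    (1 + (Qpoly p + Npoly p)) * (1 + (Qpoly p + Npoly p)) = p * (1 + (Qpoly p + Npoly p)) := by
  rw [← sum_xbar_pow_val]
  conv_lhs => rw [Finset.sum_mul]
  simp only [xbar_pow_val_mul_sum_xbar_pow_val, Finset.sum_const, Finset.card_univ, ZMod.card,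
    nsmul_eq_mul]

lemma Qpoly_sub_Npoly_mul_one_add (hp2 : p ≠ 2) :
    (Qpoly p - Npoly p) * (1 + (Qpoly p + Npoly p)) = 0 := by
  rw [Qpoly_sub_Npoly, ← sum_xbar_pow_val, Finset.sum_mul]
  simp only [mul_assoc, xbar_pow_val_mul_sum_xbar_pow_val]
  rw [← Finset.sum_mul, ← Int.cast_sum,
    quadraticChar_sum_zero (by rwa [ZMod.ringChar_zmod_n]), Int.cast_zero, zero_mul]

lemma Qpoly_sub_Npoly_mul_self (hp2 : p ≠ 2) :
    (Qpoly p - Npoly p) * (Qpoly p - Npoly p)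
      = (quadraticChar (ZMod p) (-1) : Rn p) * ((p - 1) - (Qpoly p + Npoly p)) := by
  have hchar : ringChar (ZMod p) ≠ 2 := by rwa [ZMod.ringChar_zmod_n]
  have hterm : ∀ c : ZMod p,
      (∑ a, (quadraticChar (ZMod p) a : Rn p) * quadraticChar (ZMod p) (c - a)) * xbar p ^ c.val
        = (if c = 0 then (quadraticChar (ZMod p) (-1) : Rn p) * (p - 1) else 0)
          - (quadraticChar (ZMod p) (-1) : Rn p) * (if c ≠ 0 then xbar p ^ c.val else 0) := by
    intro c
    simp only [← Int.cast_mul, ← Int.cast_sum]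
    by_cases hc : c = 0
    · subst hc
      simp only [zero_sub, sum_quadraticChar_mul_quadraticChar_neg, ZMod.card]
      push_cast
      simp
    · rw [sum_quadraticChar_mul_quadraticChar_sub hchar hc]
      simp [hc]
  rw [Qpoly_sub_Npoly, sum_xbar_pow_val_mul_sum, Finset.sum_congr rfl fun c _ => hterm c,
    Finset.sum_sub_distrib, Finset.sum_ite_eq', if_pos (Finset.mem_univ _), ← Finset.mul_sum,
    ← Qpoly_add_Npoly]
  ring

theorem isQRTable_Qpoly_Npoly (hp : p % 4 = 3) : IsQRTable (p : Rn p) (Qpoly p) (Npoly p) := by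
  have hp2 : p ≠ 2 := by omega
  have hχ : (quadraticChar (ZMod p) (-1) : Rn p) = -1 := by
    rw [quadraticChar_neg_one_iff_not_isSquare.mpr (by
      rw [FiniteField.isSquare_neg_one_iff, ZMod.card]; omega)]
    push_cast; rfl
  have hS := one_add_Qpoly_add_Npoly_mul_self (p := p)
  have hd := Qpoly_sub_Npoly_mul_one_add hp2
  have he := Qpoly_sub_Npoly_mul_self hp2
  rw [hχ] at he
  -- `4Q² = (h + e)²`, `4N² = (h - e)²` and `4QN = h² - e²` with `h = Q + N`, `e = Q - N`
  exact ⟨by linear_combination hS + 2 * hd + he, by linear_combination hS - 2 * hd + he,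
    by linear_combination hS - he⟩

lemma qrGenerators_eq :
    E1gen p = qrE ((p + 1) / 12 % 3) (uP p) (Qpoly p) (Npoly p) ∧
      E2gen p = qrE ((p + 1) / 12 % 3) (uP p) (Npoly p) (Qpoly p) ∧
      D1gen p = qrD ((p + 1) / 12 % 3) (uP p) (Qpoly p) (Npoly p) ∧
      D2gen p = qrD ((p + 1) / 12 % 3) (uP p) (Npoly p) (Qpoly p) := by
  dsimp only [E1gen, E2gen, D1gen, D2gen, qrE, qrD, qrComponentE, qrComponentD, peirceMk]
  split_ifs <;> exact ⟨rfl, rfl, rfl, rfl⟩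

end QuadraticResidueSums

theorem stmt18 (p : ℕ) [Fact p.Prime] (hp12 : p % 12 = 11) :
    (∀ x : Fin p → R9, toPoly p x ∈ Ideal.span {E1gen p} →
        x ∈ dualCode p (Ideal.span {E1gen p})) ∧
    (∀ x : Fin p → R9, toPoly p x ∈ Ideal.span {E2gen p} →
        x ∈ dualCode p (Ideal.span {E2gen p})) ∧
    dualCode p (Ideal.span {E1gen p}) = {x | toPoly p x ∈ Ideal.span {D1gen p}} ∧
    dualCode p (Ideal.span {E2gen p}) = {x | toPoly p x ∈ Ideal.span {D2gen p}} := by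
  have hp4 : p % 4 = 3 := by omega
  have hk : (p + 1) / 12 % 3 < 3 := Nat.mod_lt _ (by norm_num)
  have hpk := natCast_eq_of_mod_twelve (A := Rn p) nine_eq_zero hp12
  have hσu : invX p (uP p) = uP p := invX_ofR uu
  have T := isQRTable_Qpoly_Npoly hp4
  obtain ⟨hE1, hDE1, hD1⟩ := qrE_spec (invX p) nine_eq_zero hk hpk T
    isIdempotentElem_uP hσu (invX_Qpoly hp4) (invX_Npoly hp4)
  obtain ⟨hE2, hDE2, hD2⟩ := qrE_spec (invX p) nine_eq_zero hk hpk T.swap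
    isIdempotentElem_uP hσu (invX_Npoly hp4) (invX_Qpoly hp4)
  obtain ⟨hE1gen, hE2gen, hD1gen, hD2gen⟩ := qrGenerators_eq (p := p)
  obtain ⟨selfOrth1, dual1⟩ := selfOrthogonal_and_dualCode_eq_of_isIdempotentElem hE1 hDE1 hD1
  obtain ⟨selfOrth2, dual2⟩ := selfOrthogonal_and_dualCode_eq_of_isIdempotentElem hE2 hDE2 hD2
  rw [hE1gen, hE2gen, hD1gen, hD2gen]
  exact ⟨selfOrth1, selfOrth2, dual1, dual2⟩
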